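/- Let S be a multiplicative subset of an integral domain R and let I be a nonzero ideal of R that is 2-v-generated, i.e., there exist a, b ∈ I with (R : I) = (R : aR + bR). Then the ideal I R_S of R_S is 2-v-generated. -/

import Mathlib

/-!
An element `r / t` of the fraction field lies in `(A : J)` exactly when `J ⊆ (tA :_A r)`, so
`(A : J) = (A : J')` says that `J` and `J'` lie in the same colon ideals `(tA :_A r)`. Up to units
of `R_S`, such a colon ideal of `R_S` comes from `r, t ∈ R`, and `t ∣ a r` in `R_S` means
`t ∣ s a r` in `R` for some `s ∈ S`; absorbing the two denominators for `a` and `b` into `r`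
brings us back to the hypothesis on `I`.
-/

/-- `(A : J) = {x ∈ Frac A : x J ⊆ A}`, as an `A`-submodule of the fraction field. -/
noncomputable def idealInv {A : Type*} [CommRing A] (J : Ideal A) :
    Submodule A (FractionRing A) :=
  1 / Submodule.map (Algebra.linearMap A (FractionRing A)) J

/-- A nonzero ideal `I` is `2`-`v`-generated if it contains elements `a, b` with
`(A : I) = (A : aA + bA)`. -/
noncomputable def TwoVGenerated {A : Type*} [CommRing A] (I : Ideal A) : Prop :=
  ∃ a b, a ∈ I ∧ b ∈ I ∧ idealInv I = idealInv (Ideal.span {a, b})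

open Submodule

section IdealInv

variable {A : Type*} [CommRing A]

lemma mem_span_singleton_colon_singleton_iff {r t c : A} :
    c ∈ (Ideal.span {t}).colon {r} ↔ t ∣ c * r := by
  rw [mem_colon_singleton, smul_eq_mul, Ideal.mem_span_singleton]

lemma colon_singleton_eq_of_associated {r r' t t' : A} (hr : Associated r r')
    (ht : Associated t t') :
    (Ideal.span {t}).colon {r} = (Ideal.span {t'}).colon {r'} := by
  ext c
  simp only [mem_span_singleton_colon_singleton_iff, ht.dvd_iff_dvd_left,
    (hr.mul_left c).dvd_iff_dvd_right]

lemma mem_idealInv_iff (J : Ideal A) (x : FractionRing A) :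
    x ∈ idealInv J ↔ ∀ j ∈ J, x * algebraMap A (FractionRing A) j ∈ (1 : Submodule A _) := by
  simp [idealInv, mem_div_iff_forall_mul_mem]

variable [IsDomain A]

lemma div_mul_mem_one_iff {r t c : A} (ht : t ≠ 0) :
    algebraMap A (FractionRing A) r / algebraMap A (FractionRing A) t *
      algebraMap A (FractionRing A) c ∈ (1 : Submodule A (FractionRing A)) ↔ t ∣ c * r := by
  have ht' : algebraMap A (FractionRing A) t ≠ 0 :=
    (map_ne_zero_iff _ (IsFractionRing.injective A _)).2 ht
  simp only [mem_one, dvd_def]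
  refine exists_congr fun d => ?_
  rw [div_mul_eq_mul_div, eq_div_iff ht', ← map_mul, ← map_mul,
    (IsFractionRing.injective A _).eq_iff, mul_comm r, mul_comm d, eq_comm]

lemma div_mem_idealInv_iff {J : Ideal A} {r t : A} (ht : t ≠ 0) :
    algebraMap A (FractionRing A) r / algebraMap A (FractionRing A) t ∈ idealInv J ↔
      J ≤ (Ideal.span {t}).colon {r} := by
  simp only [mem_idealInv_iff, div_mul_mem_one_iff ht, SetLike.le_def,
    mem_span_singleton_colon_singleton_iff]

lemma idealInv_eq_idealInv_iff {J J' : Ideal A} :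
    idealInv J = idealInv J' ↔ ∀ r t : A, t ≠ 0 →
      (J ≤ (Ideal.span {t}).colon {r} ↔ J' ≤ (Ideal.span {t}).colon {r}) := by
  refine ⟨fun h r t ht => by rw [← div_mem_idealInv_iff ht, h, div_mem_idealInv_iff ht],
    fun h => SetLike.ext fun x => ?_⟩
  obtain ⟨r, t, ht, rfl⟩ := IsFractionRing.div_surjective A x
  rw [div_mem_idealInv_iff (nonZeroDivisors.ne_zero ht),
    div_mem_idealInv_iff (nonZeroDivisors.ne_zero ht), h r t (nonZeroDivisors.ne_zero ht)]

lemma twoVGenerated_iff {I : Ideal A} :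
    TwoVGenerated I ↔ ∃ a ∈ I, ∃ b ∈ I, ∀ r t : A, t ≠ 0 →
      a ∈ (Ideal.span {t}).colon {r} → b ∈ (Ideal.span {t}).colon {r} →
        I ≤ (Ideal.span {t}).colon {r} := by
  simp only [TwoVGenerated, idealInv_eq_idealInv_iff, Ideal.span_le, Set.insert_subset_iff,
    Set.singleton_subset_iff, SetLike.mem_coe]
  exact ⟨fun ⟨a, b, ha, hb, h⟩ => ⟨a, ha, b, hb, fun r t ht hra hrb => (h r t ht).2 ⟨hra, hrb⟩⟩,
    fun ⟨a, ha, b, hb, h⟩ => ⟨a, b, ha, hb, fun r t ht =>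
      ⟨fun hI => ⟨hI ha, hI hb⟩, fun ⟨hra, hrb⟩ => h r t ht hra hrb⟩⟩⟩

end IdealInv

lemma IsLocalization.algebraMap_dvd_algebraMap_iff {R : Type*} [CommRing R] (M : Submonoid R)
    {S : Type*} [CommRing S] [Algebra R S] [IsLocalization M S] {t x : R} :
    algebraMap R S t ∣ algebraMap R S x ↔ ∃ m ∈ M, t ∣ m * x := by
  constructor
  · rintro ⟨y, hy⟩
    obtain ⟨⟨d, m⟩, hd⟩ := surj M y
    have : algebraMap R S (t * d) = algebraMap R S (m * x) := by
      rw [map_mul, ← hd, ← mul_assoc, ← hy, map_mul, mul_comm]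
    obtain ⟨c, hc⟩ := (eq_iff_exists M S).1 this
    exact ⟨c * m, mul_mem c.2 m.2, c * d, by rw [mul_assoc, ← hc]; ring⟩
  · rintro ⟨m, hm, hdvd⟩
    rw [← (map_units S ⟨m, hm⟩).dvd_mul_left, ← map_mul]
    exact map_dvd _ hdvd

theorem TwoVGenerated.map_of_isLocalization {R R' : Type*} [CommRing R] [IsDomain R]
    [CommRing R'] [IsDomain R'] [Algebra R R'] (M : Submonoid R) [IsLocalization M R']
    {I : Ideal R} (hI : TwoVGenerated I) : TwoVGenerated (I.map (algebraMap R R')) := by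
  obtain ⟨a, ha, b, hb, hab⟩ := twoVGenerated_iff.1 hI
  refine twoVGenerated_iff.2 ⟨_, Ideal.mem_map_of_mem _ ha, _, Ideal.mem_map_of_mem _ hb,
    fun r' t' ht' ha' hb' => ?_⟩
  have associated_of_mul {x y : R'} (m : M) (h : x * algebraMap R R' m = y) : Associated x y :=
    h ▸ associated_mul_unit_right _ _ (IsLocalization.map_units R' m)
  obtain ⟨⟨r, m⟩, hr⟩ := IsLocalization.surj M r'
  obtain ⟨⟨t, n⟩, ht⟩ := IsLocalization.surj M t'
  rw [colon_singleton_eq_of_associated (associated_of_mul m hr) (associated_of_mul n ht)]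
    at ha' hb' ⊢
  have ht0 : t ≠ 0 := by
    rintro rfl
    exact ht' ((IsLocalization.map_units R' n).mul_left_eq_zero.1 (by simpa using ht))
  simp only [mem_span_singleton_colon_singleton_iff, ← map_mul,
    IsLocalization.algebraMap_dvd_algebraMap_iff M] at ha' hb'
  obtain ⟨m₁, hm₁, hd₁⟩ := ha'
  obtain ⟨m₂, hm₂, hd₂⟩ := hb'
  have hI' : I ≤ (Ideal.span {t}).colon {m₁ * m₂ * r} := by
    refine hab _ t ht0 ?_ ?_ <;> rw [mem_span_singleton_colon_singleton_iff]
    · rw [show a * (m₁ * m₂ * r) = m₁ * (a * r) * m₂ by ring]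
      exact hd₁.mul_right m₂
    · rw [show b * (m₁ * m₂ * r) = m₂ * (b * r) * m₁ by ring]
      exact hd₂.mul_right m₁
  rw [Ideal.map_le_iff_le_comap]
  intro i hi
  rw [Ideal.mem_comap, mem_span_singleton_colon_singleton_iff, ← map_mul,
    IsLocalization.algebraMap_dvd_algebraMap_iff M]
  refine ⟨m₁ * m₂, mul_mem hm₁ hm₂, ?_⟩
  simpa only [mem_span_singleton_colon_singleton_iff, mul_comm, mul_left_comm] using hI' hi

theorem stmt_16_general {R : Type*} [CommRing R] [IsDomain R] (S : Submonoid R)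
    (hS : (0 : R) ∉ S) (I : Ideal R) (h2v : TwoVGenerated I) :
    TwoVGenerated (I.map (algebraMap R (Localization S))) := by
  have : IsDomain (Localization S) :=
    IsLocalization.isDomain_localization fun s hs =>
      mem_nonZeroDivisors_of_ne_zero fun h => hS (h ▸ hs)
  exact h2v.map_of_isLocalization S

theorem stmt_16 {R : Type*} [CommRing R] [IsDomain R] (S : Submonoid R)
    (hS : (0 : R) ∉ S) (I : Ideal R) (hI : I ≠ ⊥) (h2v : TwoVGenerated I) :
    TwoVGenerated (I.map (algebraMap R (Localization S))) :=
  stmt_16_general S hS I h2v
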